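/- Let (a_p)_{p∈ℕ₀} be a sequence of nonnegative real numbers. Then the following are equivalent: (A₁) there exists h > 0 such that sup_{p∈ℕ₀} a_p/h^p < ∞; (B₁) for every (r_p) ∈ ℜ one has sup_{p∈ℕ₀} a_p/R_p < ∞, where (R_p) is the product sequence corresponding to (r_p). -/

import Mathlib

open scoped ENNReal BigOperators

noncomputable section

/-- `ℝ^d` modeled as Euclidean space. -/
abbrev Euc (d : ℕ) := EuclideanSpace ℝ (Fin d)

/-- The partial derivative `∂_i φ` of a function `φ : ℝ^d → ℂ`. -/
noncomputable def pderivI {d : ℕ} (i : Fin d) (φ : Euc d → ℂ) : Euc d → ℂ :=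
  fun x => fderiv ℝ φ x (EuclideanSpace.single i 1)

/-- The multi-index partial derivative `∂^k φ = ∂_1^{k_1} ⋯ ∂_d^{k_d} φ`. -/
noncomputable def mderiv {d : ℕ} (k : Fin d → ℕ) (φ : Euc d → ℂ) : Euc d → ℂ :=
  (List.finRange d).foldr (fun i ψ => (pderivI i)^[k i] ψ) φ

/-- The class ℜ of sequences with `r 0 = 1` monotonically increasing to infinity. -/
def RClass (r : ℕ → ℝ) : Prop :=
  r 0 = 1 ∧ Monotone r ∧ Filter.Tendsto r Filter.atTop Filter.atTop

/-- The product sequence `R_p = ∏_{i=0}^p r_i`. -/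
noncomputable def prodSeq (r : ℕ → ℝ) (p : ℕ) : ℝ :=
  ∏ i ∈ Finset.range (p + 1), r i

/-- The seminorm `q_{K,h}(φ)`, with values in `[0,∞]`. -/
noncomputable def qnormK {d : ℕ} (M : ℕ → ℝ) (K : Set (Euc d)) (h : ℝ)
    (φ : Euc d → ℂ) : ℝ≥0∞ :=
  ⨆ (k : Fin d → ℕ) (x : K), ENNReal.ofReal (‖mderiv k φ x‖ / (h ^ (∑ i, k i) * M (∑ i, k i)))

/-- The seminorm `sup_{k,x∈K} |∂^k φ(x)|/(R_{|k|} M_k)`, with values in `[0,∞]`. -/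
noncomputable def qrnormK {d : ℕ} (M : ℕ → ℝ) (r : ℕ → ℝ) (K : Set (Euc d))
    (φ : Euc d → ℂ) : ℝ≥0∞ :=
  ⨆ (k : Fin d → ℕ) (x : K),
    ENNReal.ofReal (‖mderiv k φ x‖ / (prodSeq r (∑ i, k i) * M (∑ i, k i)))

/-- The norm `‖φ‖_{∞,h}`, with values in `[0,∞]`. -/
noncomputable def hnorm {d : ℕ} (M : ℕ → ℝ) (h : ℝ) (φ : Euc d → ℂ) : ℝ≥0∞ :=
  ⨆ (k : Fin d → ℕ) (x : Euc d),
    ENNReal.ofReal (‖mderiv k φ x‖ / (h ^ (∑ i, k i) * M (∑ i, k i)))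

/-- The norm `‖φ‖_{(r_p)}`, with values in `[0,∞]`. -/
noncomputable def rnorm {d : ℕ} (M : ℕ → ℝ) (r : ℕ → ℝ) (φ : Euc d → ℂ) : ℝ≥0∞ :=
  ⨆ (k : Fin d → ℕ) (x : Euc d),
    ENNReal.ofReal (‖mderiv k φ x‖ / (prodSeq r (∑ i, k i) * M (∑ i, k i)))

/-- Membership in the space `D^{{M_p}}` of Roumieu test functions. -/
def IsDMp {d : ℕ} (M : ℕ → ℝ) (φ : Euc d → ℂ) : Prop :=
  ContDiff ℝ (⊤ : ℕ∞) φ ∧ HasCompactSupport φ ∧ ∃ h > 0, hnorm M h φ < ⊤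

/-- `T` is a ℂ-linear functional on `D^{{M_p}}`. -/
def LinearOnD {d : ℕ} (M : ℕ → ℝ) (T : (Euc d → ℂ) → ℂ) : Prop :=
  (∀ φ ψ, IsDMp M φ → IsDMp M ψ → T (φ + ψ) = T φ + T ψ) ∧
  (∀ (c : ℂ) (φ), IsDMp M φ → T (c • φ) = c * T φ)

/-- `T` is a Roumieu ultradistribution. -/
def IsRoumieuUD {d : ℕ} (M : ℕ → ℝ) (T : (Euc d → ℂ) → ℂ) : Prop :=
  ∀ K : Set (Euc d), IsCompact K →
    ∃ s, RClass s ∧ ∃ C > 0, ∀ φ, IsDMp M φ → tsupport φ ⊆ K →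
      ENNReal.ofReal ‖T φ‖ ≤ ENNReal.ofReal C * rnorm M s φ

/-- `u` is an ℜ-approximate unit. -/
def IsRApproxUnit {d : ℕ} (M : ℕ → ℝ) (u : ℕ → Euc d → ℂ) : Prop :=
  (∀ n, IsDMp M (u n)) ∧
  (∀ r, RClass r → (⨆ n, rnorm M r (u n)) < ⊤) ∧
  (∀ K : Set (Euc d), IsCompact K → ∃ h > 0,
    Filter.Tendsto (fun n => qnormK M K h (fun x => u n x - 1)) Filter.atTop (nhds 0))

/-- `u` is a special ℜ-approximate unit. -/
def IsSpecialRApproxUnit {d : ℕ} (M : ℕ → ℝ) (u : ℕ → Euc d → ℂ) : Prop :=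
  IsRApproxUnit M u ∧
  ∀ K : Set (Euc d), IsCompact K → ∃ n₀, ∀ n ≥ n₀, ∀ x ∈ K, u n x = 1

/-- Condition (M.1): `M_p^2 ≤ M_{p-1} M_{p+1}` for `p ≥ 1`. -/
def CondM1 (M : ℕ → ℝ) : Prop := ∀ p : ℕ, M (p + 1) ^ 2 ≤ M p * M (p + 2)

/-- Condition (M.2). -/
def CondM2 (M : ℕ → ℝ) : Prop :=
  ∃ A > 0, ∃ H ≥ (1 : ℝ), ∀ p q : ℕ, q ≤ p → M p ≤ A * H ^ p * M q * M (p - q)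

/-- Condition (M.3). -/
def CondM3 (M : ℕ → ℝ) : Prop :=
  ∃ A > 0, ∀ q : ℕ, 1 ≤ q →
    ∑' p : ℕ, M (q + p) / M (q + p + 1) ≤ A * q * M q / M (q + 1)

private lemma r_ge_one {r : ℕ → ℝ} (hr : RClass r) (i : ℕ) : 1 ≤ r i := by
  obtain ⟨h0, hm, -⟩ := hr
  calc (1:ℝ) = r 0 := h0.symm
  _ ≤ r i := hm (Nat.zero_le i)

private lemma prodSeq_ge_one {r : ℕ → ℝ} (hr : RClass r) (p : ℕ) : 1 ≤ prodSeq r p := by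
  calc (1:ℝ) = ∏ _i ∈ Finset.range (p+1), (1:ℝ) := by simp
  _ ≤ ∏ i ∈ Finset.range (p+1), r i :=
      Finset.prod_le_prod (fun i _ => zero_le_one) (fun i _ => r_ge_one hr i)
  _ = prodSeq r p := rfl

private lemma not_bdd_exists (f : ℕ → ℝ) (hf : ¬ BddAbove (Set.range f)) (B : ℝ) (N : ℕ) :
    ∃ p, N < p ∧ B < f p := by
  by_contra hc
  push_neg at hc
  apply hf
  refine ⟨max B ((Finset.range (N+1)).sup' ⟨0, by simp⟩ f), ?_⟩
  rintro y ⟨p, rfl⟩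
  rcases le_or_gt p N with h | h
  · exact le_max_of_le_right (Finset.le_sup' f (Finset.mem_range.mpr (by omega)))
  · exact le_max_of_le_left (hc p h)

/-- Komatsu's first lemma. -/
theorem stmt10 (a : ℕ → ℝ) (ha : ∀ p, 0 ≤ a p) :
    (∃ h > 0, BddAbove (Set.range fun p => a p / h ^ p)) ↔
    (∀ r, RClass r → BddAbove (Set.range fun p => a p / prodSeq r p)) := by
  constructor
  · rintro ⟨h, hh, C, hC⟩ r hr
    have hCub : ∀ p, a p / h ^ p ≤ C := fun p => hC ⟨p, rfl⟩
    have hC0 : 0 ≤ C := le_trans (ha 0) (by simpa using hCub 0)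
    set h' : ℝ := max h 1 with hh'
    have h'1 : (1:ℝ) ≤ h' := le_max_right _ _
    have h'0 : (0:ℝ) < h' := lt_of_lt_of_le one_pos h'1
    have hb : ∀ p, a p / h' ^ p ≤ C := by
      intro p
      refine le_trans ?_ (hCub p)
      exact div_le_div_of_nonneg_left (ha p) (pow_pos hh p)
        (pow_le_pow_left₀ (le_of_lt hh) (le_max_left _ _) p)
    have hab : ∀ p, a p ≤ C * h' ^ p := fun p =>
      (div_le_iff₀ (pow_pos h'0 p)).mp (hb p)
    obtain ⟨h0, hm, htop⟩ := hr
    obtain ⟨N, hN⟩ := Filter.eventually_atTop.mp (htop.eventually_ge_atTop h')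
    have hRpos : ∀ p, (0:ℝ) < prodSeq r p := fun p =>
      lt_of_lt_of_le one_pos (prodSeq_ge_one ⟨h0, hm, htop⟩ p)
    have key : ∀ p, N ≤ p → h' ^ p ≤ h' ^ N * prodSeq r p := by
      intro p hp
      have hsplit : prodSeq r p =
          (∏ i ∈ Finset.Ico 0 N, r i) * ∏ i ∈ Finset.Ico N (p+1), r i := by
        rw [prodSeq, Finset.range_eq_Ico, ← Finset.prod_Ico_consecutive r (Nat.zero_le N) (by omega)]
      have h1 : (1:ℝ) ≤ ∏ i ∈ Finset.Ico 0 N, r i := by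
        calc (1:ℝ) = ∏ _i ∈ Finset.Ico 0 N, (1:ℝ) := by simp
        _ ≤ ∏ i ∈ Finset.Ico 0 N, r i :=
            Finset.prod_le_prod (fun i _ => zero_le_one) (fun i _ => r_ge_one ⟨h0, hm, htop⟩ i)
      have h2 : h' ^ (p + 1 - N) ≤ ∏ i ∈ Finset.Ico N (p+1), r i := by
        calc h' ^ (p + 1 - N) = ∏ _i ∈ Finset.Ico N (p+1), h' := by
              rw [Finset.prod_const, Nat.card_Ico]
        _ ≤ ∏ i ∈ Finset.Ico N (p+1), r i := by
              refine Finset.prod_le_prod (fun i _ => le_of_lt h'0) ?_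
              intro i hi
              exact hN i (Finset.mem_Ico.mp hi).1
      have h3 : h' ^ (p - N) ≤ prodSeq r p := by
        calc h' ^ (p - N) ≤ h' ^ (p + 1 - N) := pow_le_pow_right₀ h'1 (by omega)
        _ ≤ ∏ i ∈ Finset.Ico N (p+1), r i := h2
        _ ≤ prodSeq r p := by
              rw [hsplit]
              nlinarith [h2, Finset.prod_nonneg (fun i (_ : i ∈ Finset.Ico N (p+1)) =>
                le_trans zero_le_one (r_ge_one ⟨h0, hm, htop⟩ i))]
      calc h' ^ p = h' ^ N * h' ^ (p - N) := by rw [← pow_add]; congr 1; omega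
      _ ≤ h' ^ N * prodSeq r p := by
            exact mul_le_mul_of_nonneg_left h3 (le_of_lt (pow_pos h'0 N))
    refine ⟨C * h' ^ N + ∑ p ∈ Finset.range N, a p, ?_⟩
    rintro y ⟨p, rfl⟩
    have hsum0 : (0:ℝ) ≤ ∑ q ∈ Finset.range N, a q :=
      Finset.sum_nonneg fun q _ => ha q
    rcases le_or_gt N p with hp | hp
    · have : a p / prodSeq r p ≤ C * h' ^ N := by
        rw [div_le_iff₀ (hRpos p)]
        calc a p ≤ C * h' ^ p := hab p
        _ ≤ C * (h' ^ N * prodSeq r p) := mul_le_mul_of_nonneg_left (key p hp) hC0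
        _ = C * h' ^ N * prodSeq r p := by ring
      simp only []
      linarith
    · have h1 : a p / prodSeq r p ≤ a p :=
        div_le_self (ha p) (prodSeq_ge_one ⟨h0, hm, htop⟩ p)
      have h2 : a p ≤ ∑ q ∈ Finset.range N, a q :=
        Finset.single_le_sum (fun q _ => ha q) (Finset.mem_range.mpr hp)
      have : (0:ℝ) ≤ C * h' ^ N := mul_nonneg hC0 (le_of_lt (pow_pos h'0 N))
      simp only []
      linarith
  · intro H
    by_contra hcon
    push_neg at hcon
    -- hcon : ∀ h > 0, ¬ BddAbove ...
    have hub : ∀ (k : ℕ) (N : ℕ), ∃ p, N < p ∧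
        (k:ℝ) * (k+1) < a p / ((k:ℝ)+1) ^ p := by
      intro k N
      exact not_bdd_exists _ (hcon ((k:ℝ)+1) (by positivity)) _ N
    choose g hg1 hg2 using hub
    set P : ℕ → ℕ := fun k => Nat.rec (g 0 0) (fun k ih => g (k+1) ih) k with hP
    have hPsucc : ∀ k, P (k+1) = g (k+1) (P k) := fun k => rfl
    have hPmono : StrictMono P := strictMono_nat_of_lt_succ (by
      intro k; rw [hPsucc]; exact hg1 (k+1) (P k))
    have hPval : ∀ k : ℕ, (k:ℝ) * ((k:ℝ)+1) < a (P k) / ((k:ℝ)+1) ^ P k := by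
      intro k
      cases k with
      | zero => exact hg2 0 0
      | succ k => rw [hPsucc]; exact hg2 (k+1) (P k)
    set r : ℕ → ℝ := fun p => 1 + ((Finset.range p).filter (fun k => P k < p)).card with hrdef
    have hr1 : ∀ i, (1:ℝ) ≤ r i := fun i => le_add_of_nonneg_right (by positivity)
    have hrmono : Monotone r := by
      intro p q hpq
      have hc : ((Finset.range p).filter (fun k => P k < p)).card ≤
          ((Finset.range q).filter (fun k => P k < q)).card := by
        refine Finset.card_le_card ?_
        intro k hk
        simp only [Finset.mem_filter, Finset.mem_range] at hk ⊢
        omega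
      have hc' : (((Finset.range p).filter (fun k => P k < p)).card : ℝ) ≤
          (((Finset.range q).filter (fun k => P k < q)).card : ℝ) := by exact_mod_cast hc
      simp only [hrdef]
      linarith
    have hrclass : RClass r := by
      refine ⟨by simp [hrdef], hrmono, ?_⟩
      refine Filter.tendsto_atTop_atTop_of_monotone hrmono ?_
      intro b
      obtain ⟨n, hn⟩ := exists_nat_gt b
      refine ⟨P n + 1, ?_⟩
      have hsub : Finset.range (n+1) ⊆
          (Finset.range (P n + 1)).filter (fun k => P k < P n + 1) := by
        intro j hj
        simp only [Finset.mem_range] at hj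
        have hjn : j ≤ n := by omega
        have h1 : P j ≤ P n := hPmono.monotone hjn
        have h2 : j ≤ P j := hPmono.le_apply
        simp only [Finset.mem_filter, Finset.mem_range]
        omega
      have hcard : n + 1 ≤ ((Finset.range (P n + 1)).filter (fun k => P k < P n + 1)).card := by
        calc n + 1 = (Finset.range (n+1)).card := (Finset.card_range _).symm
        _ ≤ _ := Finset.card_le_card hsub
      simp only [hrdef]
      have : ((n:ℝ) + 1) ≤ (((Finset.range (P n + 1)).filter (fun k => P k < P n + 1)).card : ℝ) := by
        exact_mod_cast hcard
      linarith
    have hrub : ∀ k p, p ≤ P k → r p ≤ (k:ℝ) + 1 := by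
      intro k p hp
      have hsub : (Finset.range p).filter (fun j => P j < p) ⊆ Finset.range k := by
        intro j hj
        simp only [Finset.mem_filter, Finset.mem_range] at hj ⊢
        have : P j < P k := by omega
        exact hPmono.lt_iff_lt.mp this
      have hcard : ((Finset.range p).filter (fun j => P j < p)).card ≤ k :=
        le_trans (Finset.card_le_card hsub) (by simp)
      simp only [hrdef]
      have : (((Finset.range p).filter (fun j => P j < p)).card : ℝ) ≤ (k:ℝ) := by
        exact_mod_cast hcard
      linarith
    have hRub : ∀ k, prodSeq r (P k) ≤ ((k:ℝ)+1) ^ (P k + 1) := by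
      intro k
      calc prodSeq r (P k) ≤ ∏ _i ∈ Finset.range (P k + 1), ((k:ℝ)+1) := by
            refine Finset.prod_le_prod (fun i _ => le_trans zero_le_one (hr1 i)) ?_
            intro i hi
            exact hrub k i (by have := Finset.mem_range.mp hi; omega)
      _ = ((k:ℝ)+1) ^ (P k + 1) := by rw [Finset.prod_const, Finset.card_range]
    have hbig : ∀ k : ℕ, (k:ℝ) < a (P k) / prodSeq r (P k) := by
      intro k
      have hRpos : (0:ℝ) < prodSeq r (P k) :=
        lt_of_lt_of_le one_pos (prodSeq_ge_one hrclass (P k))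
      rw [lt_div_iff₀ hRpos]
      have h1 : (k:ℝ) * ((k:ℝ)+1) * ((k:ℝ)+1) ^ P k < a (P k) := by
        have := hPval k
        rw [lt_div_iff₀ (by positivity : (0:ℝ) < ((k:ℝ)+1) ^ P k)] at this
        exact this
      calc (k:ℝ) * prodSeq r (P k) ≤ (k:ℝ) * ((k:ℝ)+1) ^ (P k + 1) := by
            exact mul_le_mul_of_nonneg_left (hRub k) (Nat.cast_nonneg k)
      _ = (k:ℝ) * ((k:ℝ)+1) * ((k:ℝ)+1) ^ P k := by ring
      _ < a (P k) := h1
    obtain ⟨C, hC⟩ := H r hrclass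
    obtain ⟨n, hn⟩ := exists_nat_gt C
    have h1 : a (P n) / prodSeq r (P n) ≤ C := hC ⟨P n, rfl⟩
    have h2 := hbig n
    linarith

end
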